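/- arXiv:1312.1329 — 3 statements merged into one kernel-verified Lean document; each statement's English description precedes it below -/
import Mathlib

section
/- Let ρ = Σ_j p_j |ψ_j⟩⟨ψ_j| and σ = Σ_k q_k |φ_k⟩⟨φ_k| be density matrices on a finite-dimensional complex Hilbert space, where the ψ_j and φ_k are unit vectors (not necessarily orthogonal) and p_j, q_k ≥ 0 with Σ_j p_j = Σ_k q_k = 1. Then Φ(ρ,σ) ≤ Σ_{j,k} p_j q_k Φ(|ψ_j⟩⟨ψ_j|, |φ_k⟩⟨φ_k|). -/
/-!
The commutator is bilinear, so `[ρ, σ] = ∑ⱼₖ pⱼ qₖ [|ψⱼ⟩⟨ψⱼ|, |φₖ⟩⟨φₖ|]` is a convex combination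
with weights `pⱼ qₖ`, and `Φ` is twice the squared Frobenius norm of the commutator. The claim is
Jensen's inequality for the convex function `‖·‖²`.
-/

open Matrix ComplexOrder

/-- The incompatibility measure Φ(ρ,σ) := 2‖[ρ,σ]‖²_HS = 2·Tr([ρ,σ]†[ρ,σ]). -/
noncomputable def Phi {n : ℕ} (ρ σ : Matrix (Fin n) (Fin n) ℂ) : ℝ :=
  2 * (((ρ * σ - σ * ρ)ᴴ * (ρ * σ - σ * ρ)).trace).re

/-- The rank-one projection |ψ⟩⟨ψ| associated to a (unit) vector ψ. -/
def pureState {n : ℕ} (ψ : Fin n → ℂ) : Matrix (Fin n) (Fin n) ℂ :=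
  vecMulVec ψ (star ψ)

attribute [local instance] LieRing.ofAssociativeRing Matrix.frobeniusNormedAddCommGroup
  Matrix.frobeniusNormedSpace

theorem norm_sum_smul_sq_le_sum_mul_norm_sq {ι E : Type*} [SeminormedAddCommGroup E]
    [NormedSpace ℝ E] (s : Finset ι) (w : ι → ℝ) (x : ι → E) (hw₀ : ∀ i ∈ s, 0 ≤ w i)
    (hw₁ : ∑ i ∈ s, w i = 1) :
    ‖∑ i ∈ s, w i • x i‖ ^ 2 ≤ ∑ i ∈ s, w i * ‖x i‖ ^ 2 :=
  (convexOn_univ_norm.pow (fun _ _ ↦ norm_nonneg _) 2).map_sum_le hw₀ hw₁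
    (fun _ _ ↦ Set.mem_univ _)

theorem lie_sum_smul_sum_smul {R L ι κ : Type*} [CommRing R] [LieRing L] [LieAlgebra R L]
    (s : Finset ι) (t : Finset κ) (a : ι → R) (b : κ → R) (x : ι → L) (y : κ → L) :
    ⁅∑ i ∈ s, a i • x i, ∑ k ∈ t, b k • y k⁆ =
      ∑ i ∈ s, ∑ k ∈ t, (a i * b k) • ⁅x i, y k⁆ := by
  simp only [sum_lie_sum, smul_lie, lie_smul, smul_smul, mul_comm]

namespace Matrix

theorem frobenius_norm_sq {m n 𝕜 : Type*} [Fintype m] [Fintype n] [RCLike 𝕜]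
    (A : Matrix m n 𝕜) : ‖A‖ ^ 2 = ∑ i, ∑ j, ‖A i j‖ ^ 2 := by
  rw [frobenius_norm_def, ← Real.rpow_natCast, ← Real.rpow_mul (by positivity)]
  norm_num

theorem re_trace_conjTranspose_mul_self {m n 𝕜 : Type*} [Fintype m] [Fintype n] [RCLike 𝕜]
    (A : Matrix m n 𝕜) : RCLike.re (Aᴴ * A).trace = ‖A‖ ^ 2 := by
  simp only [frobenius_norm_sq, trace, diag, mul_apply, conjTranspose_apply, RCLike.star_def,
    RCLike.conj_mul, map_sum]
  rw [Finset.sum_comm]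
  norm_cast

end Matrix

theorem Phi_eq_two_mul_norm_lie_sq {n : ℕ} (ρ σ : Matrix (Fin n) (Fin n) ℂ) :
    Phi ρ σ = 2 * ‖⁅ρ, σ⁆‖ ^ 2 := by
  rw [Phi, Ring.lie_def, ← re_trace_conjTranspose_mul_self]
  rfl

theorem phi_ensemble_convexity_general {n : ℕ} {J K : Type*} [Fintype J] [Fintype K]
    (p : J → ℝ) (q : K → ℝ) (ψ : J → (Fin n → ℂ)) (φ : K → (Fin n → ℂ))
    (hp : ∀ j, 0 ≤ p j) (hq : ∀ k, 0 ≤ q k)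
    (hp1 : ∑ j, p j = 1) (hq1 : ∑ k, q k = 1)
    (ρ σ : Matrix (Fin n) (Fin n) ℂ)
    (hρ : ρ = ∑ j, (p j : ℂ) • pureState (ψ j))
    (hσ : σ = ∑ k, (q k : ℂ) • pureState (φ k)) :
    Phi ρ σ ≤ ∑ j, ∑ k, p j * q k * Phi (pureState (ψ j)) (pureState (φ k)) := by
  simp only [Complex.coe_smul] at hρ hσ
  have hw : ∑ jk : J × K, p jk.1 * q jk.2 = 1 := by
    rw [Fintype.sum_prod_type, ← Finset.sum_mul_sum, hp1, hq1, one_mul]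
  calc Phi ρ σ
      = 2 * ‖∑ jk : J × K, (p jk.1 * q jk.2) • ⁅pureState (ψ jk.1), pureState (φ jk.2)⁆‖ ^ 2 := by
        rw [Phi_eq_two_mul_norm_lie_sq, hρ, hσ, lie_sum_smul_sum_smul, Fintype.sum_prod_type]
    _ ≤ 2 * ∑ jk : J × K, p jk.1 * q jk.2 * ‖⁅pureState (ψ jk.1), pureState (φ jk.2)⁆‖ ^ 2 := by
        gcongr
        exact norm_sum_smul_sq_le_sum_mul_norm_sq _ _ _
          (fun jk _ ↦ mul_nonneg (hp jk.1) (hq jk.2)) hw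
    _ = ∑ j, ∑ k, p j * q k * Phi (pureState (ψ j)) (pureState (φ k)) := by
        simp only [Phi_eq_two_mul_norm_lie_sq, Finset.mul_sum, Fintype.sum_prod_type]
        ring_nf

theorem phi_ensemble_convexity {n : ℕ} {J K : Type*} [Fintype J] [Fintype K]
    (p : J → ℝ) (q : K → ℝ) (ψ : J → (Fin n → ℂ)) (φ : K → (Fin n → ℂ))
    (hp : ∀ j, 0 ≤ p j) (hq : ∀ k, 0 ≤ q k)
    (hp1 : ∑ j, p j = 1) (hq1 : ∑ k, q k = 1)
    (hψ : ∀ j, star (ψ j) ⬝ᵥ ψ j = 1) (hφ : ∀ k, star (φ k) ⬝ᵥ φ k = 1)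
    (ρ σ : Matrix (Fin n) (Fin n) ℂ)
    (hρ : ρ = ∑ j, (p j : ℂ) • pureState (ψ j))
    (hσ : σ = ∑ k, (q k : ℂ) • pureState (φ k)) :
    Phi ρ σ ≤ ∑ j, ∑ k, p j * q k * Phi (pureState (ψ j)) (pureState (φ k)) :=
  phi_ensemble_convexity_general p q ψ φ hp hq hp1 hq1 ρ σ hρ hσ
end

section
/- In any complex Hilbert space of dimension at least 2, the maximum of Φ over pairs of density matrices equals 1: there exist density matrices ρ and σ (in fact pure states) with Φ(ρ,σ) = 1, and Φ(ρ,σ) ≤ 1 for all density matrices ρ, σ. -/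
open Matrix ComplexOrder

/-- A density matrix: positive semidefinite with unit trace. -/
def IsDensityMatrix {n : ℕ} (ρ : Matrix (Fin n) (Fin n) ℂ) : Prop :=
  ρ.PosSemidef ∧ ρ.trace = 1

/-!
Conjugating both arguments by a unitary changes neither Φ nor the density-matrix conditions,
so ρ may be taken diagonal, with eigenvalues `pᵢ ∈ [0, 1]`. Then
`Φ(ρ, σ) = 2 ∑ᵢⱼ (pᵢ - pⱼ)² |σᵢⱼ|²`, and the `2 × 2` minors of `σ` give `|σᵢⱼ|² ≤ σᵢᵢ σⱼⱼ`.
With the weights `qᵢ = σᵢᵢ` and `(pᵢ - pⱼ)² ≤ pᵢ (1 - pⱼ) + pⱼ (1 - pᵢ)` this yields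
`Φ ≤ 4 a (1 - a) ≤ 1` for `a = ∑ᵢ qᵢ pᵢ`.
For pure states `Φ = 4 t (1 - t)` with `t = |⟨ψ, φ⟩|²`, which is `1` at `t = 1 / 2`,
e.g. for `ψ = e₀` and `φ = (e₀ + e₁) / √2`.
-/

theorem sum_sum_sub_sq_mul_le_half {ι : Type*} [Fintype ι] {p q : ι → ℝ}
    (hp : ∀ i, p i ∈ Set.Icc 0 1) (hq : ∀ i, 0 ≤ q i) (hq₁ : ∑ i, q i = 1) :
    ∑ i, ∑ j, (p i - p j) ^ 2 * (q i * q j) ≤ 1 / 2 := by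
  set a := ∑ i, q i * p i
  set b := ∑ i, q i * (1 - p i)
  have hab : a + b = 1 := by
    rw [← hq₁, ← Finset.sum_add_distrib]
    exact Finset.sum_congr rfl fun i _ => by ring
  have hpointwise : ∀ i j, (p i - p j) ^ 2 * (q i * q j) ≤
      q i * p i * (q j * (1 - p j)) + q i * (1 - p i) * (q j * p j) := fun i j => by
    have := mul_nonneg (mul_nonneg (hq i) (hq j))
      (add_nonneg (mul_nonneg (hp i).1 (sub_nonneg.2 (hp i).2))
        (mul_nonneg (hp j).1 (sub_nonneg.2 (hp j).2)))
    nlinarith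
  calc ∑ i, ∑ j, (p i - p j) ^ 2 * (q i * q j)
      ≤ ∑ i, ∑ j, (q i * p i * (q j * (1 - p j)) + q i * (1 - p i) * (q j * p j)) :=
        Finset.sum_le_sum fun i _ => Finset.sum_le_sum fun j _ => hpointwise i j
    _ = 2 * (a * b) := by
        simp only [Finset.sum_add_distrib, ← Finset.sum_mul_sum, a, b]
        ring
    _ ≤ 1 / 2 := by nlinarith [sq_nonneg (a - b)]

namespace Matrix

theorem PosSemidef.normSq_apply_le {ι : Type*} {M : Matrix ι ι ℂ} (hM : M.PosSemidef)
    (i j : ι) : Complex.normSq (M i j) ≤ (M i i).re * (M j j).re := by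
  have hdet := (hM.submatrix ![i, j]).det_nonneg
  rw [det_fin_two] at hdet
  have hji : M j i = star (M i j) := (hM.isHermitian.apply j i).symm
  have hii : (M i i).im = 0 := Complex.conj_eq_iff_im.mp (hM.isHermitian.apply i i)
  have hjj : (M j j).im = 0 := Complex.conj_eq_iff_im.mp (hM.isHermitian.apply j j)
  simp only [submatrix_apply, cons_val_zero, cons_val_one, hji] at hdet
  have hdet_re := (Complex.nonneg_iff.mp hdet).1
  simp only [Complex.sub_re, Complex.mul_re, hii, hjj, Complex.star_def, Complex.conj_re,
    Complex.conj_im] at hdet_re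
  rw [Complex.normSq_apply]
  linarith

variable {ι : Type*} [Fintype ι]

theorem re_trace_conjTranspose_mul_self_s8 (A : Matrix ι ι ℂ) :
    (Aᴴ * A).trace.re = ∑ i, ∑ j, Complex.normSq (A i j) := by
  simp only [trace, diag_apply, mul_apply, conjTranspose_apply, Complex.re_sum,
    Complex.star_def, ← Complex.normSq_eq_conj_mul_self, Complex.ofReal_re]
  exact Finset.sum_comm

theorem diagonal_mul_sub_mul_diagonal_apply [DecidableEq ι] (d : ι → ℂ) (A : Matrix ι ι ℂ)
    (i j : ι) : (diagonal d * A - A * diagonal d) i j = (d i - d j) * A i j := by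
  rw [sub_apply, diagonal_mul, mul_diagonal]
  ring

theorem trace_conjStarAlgAut [DecidableEq ι] (u : unitary (Matrix ι ι ℂ)) (A : Matrix ι ι ℂ) :
    (Unitary.conjStarAlgAut ℂ _ u A).trace = A.trace := by
  rw [Unitary.conjStarAlgAut_apply, trace_mul_cycle, Unitary.coe_star_mul_self, one_mul]

end Matrix

section DensityMatrix

variable {n : ℕ}

theorem IsDensityMatrix.conjStarAlgAut {ρ : Matrix (Fin n) (Fin n) ℂ} (hρ : IsDensityMatrix ρ)
    (u : unitary (Matrix (Fin n) (Fin n) ℂ)) :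
    IsDensityMatrix (Unitary.conjStarAlgAut ℂ _ u ρ) :=
  ⟨hρ.1.mul_mul_conjTranspose_same _, (trace_conjStarAlgAut u ρ).trans hρ.2⟩

theorem IsDensityMatrix.eigenvalues_mem_Icc {ρ : Matrix (Fin n) (Fin n) ℂ}
    (hρ : IsDensityMatrix ρ) (i : Fin n) : hρ.1.isHermitian.eigenvalues i ∈ Set.Icc 0 1 := by
  have hsum : ∑ j, hρ.1.isHermitian.eigenvalues j = 1 := by
    simpa [hρ.2, eq_comm] using congrArg Complex.re hρ.1.isHermitian.trace_eq_sum_eigenvalues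
  exact ⟨hρ.1.eigenvalues_nonneg i,
    hsum ▸ Finset.single_le_sum (fun j _ => hρ.1.eigenvalues_nonneg j) (Finset.mem_univ i)⟩

theorem isDensityMatrix_pureState {ψ : Fin n → ℂ} (hψ : star ψ ⬝ᵥ ψ = 1) :
    IsDensityMatrix (pureState ψ) :=
  ⟨posSemidef_vecMulVec_self_star ψ, by rw [pureState, trace_vecMulVec, dotProduct_comm, hψ]⟩

theorem phi_conjStarAlgAut (u : unitary (Matrix (Fin n) (Fin n) ℂ))
    (ρ σ : Matrix (Fin n) (Fin n) ℂ) :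
    Phi (Unitary.conjStarAlgAut ℂ _ u ρ) (Unitary.conjStarAlgAut ℂ _ u σ) = Phi ρ σ := by
  simp only [Phi, ← map_mul, ← map_sub, ← star_eq_conjTranspose, ← map_star,
    trace_conjStarAlgAut]

theorem phi_diagonal (p : Fin n → ℝ) (σ : Matrix (Fin n) (Fin n) ℂ) :
    Phi (diagonal fun i => (p i : ℂ)) σ =
      2 * ∑ i, ∑ j, (p i - p j) ^ 2 * Complex.normSq (σ i j) := by
  simp only [Phi, re_trace_conjTranspose_mul_self_s8, diagonal_mul_sub_mul_diagonal_apply,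
    Complex.normSq_mul, ← Complex.ofReal_sub, Complex.normSq_ofReal, sq]

theorem phi_diagonal_le_one {p : Fin n → ℝ} (hp : ∀ i, p i ∈ Set.Icc 0 1)
    {σ : Matrix (Fin n) (Fin n) ℂ} (hσ : IsDensityMatrix σ) :
    Phi (diagonal fun i => (p i : ℂ)) σ ≤ 1 := by
  have hq : ∀ i, 0 ≤ (σ i i).re := fun i => (Complex.nonneg_iff.mp hσ.1.diag_nonneg).1
  have hq₁ : ∑ i, (σ i i).re = 1 := by
    simpa [trace, Complex.re_sum] using congrArg Complex.re hσ.2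
  have hentries : ∑ i, ∑ j, (p i - p j) ^ 2 * Complex.normSq (σ i j) ≤
      ∑ i, ∑ j, (p i - p j) ^ 2 * ((σ i i).re * (σ j j).re) :=
    Finset.sum_le_sum fun i _ => Finset.sum_le_sum fun j _ =>
      mul_le_mul_of_nonneg_left (hσ.1.normSq_apply_le i j) (sq_nonneg _)
  rw [phi_diagonal]
  linarith [sum_sum_sub_sq_mul_le_half hp hq hq₁]

theorem phi_le_one {ρ σ : Matrix (Fin n) (Fin n) ℂ}
    (hρ : IsDensityMatrix ρ) (hσ : IsDensityMatrix σ) : Phi ρ σ ≤ 1 := by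
  set U := hρ.1.isHermitian.eigenvectorUnitary
  rw [← phi_conjStarAlgAut (star U), hρ.1.isHermitian.conjStarAlgAut_star_eigenvectorUnitary]
  exact phi_diagonal_le_one hρ.eigenvalues_mem_Icc (hσ.conjStarAlgAut _)

theorem phi_pureState {ψ φ : Fin n → ℂ} (hψ : star ψ ⬝ᵥ ψ = 1) (hφ : star φ ⬝ᵥ φ = 1) :
    Phi (pureState ψ) (pureState φ) =
      4 * Complex.normSq (star ψ ⬝ᵥ φ) * (1 - Complex.normSq (star ψ ⬝ᵥ φ)) := by
  set c := star ψ ⬝ᵥ φ with hc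
  have hφψ : star φ ⬝ᵥ ψ = star c := by rw [hc, star_dotProduct]
  have hcomm : pureState ψ * pureState φ - pureState φ * pureState ψ =
      c • vecMulVec ψ (star φ) - star c • vecMulVec φ (star ψ) := by
    simp only [pureState, vecMulVec_mul_vecMulVec, vecMulVec_smul, ← hc, hφψ]
  have htrace : ((pureState ψ * pureState φ - pureState φ * pureState ψ)ᴴ *
      (pureState ψ * pureState φ - pureState φ * pureState ψ)).trace =
      2 * (Complex.normSq c : ℂ) * (1 - Complex.normSq c) := by
    rw [hcomm]
    simp only [conjTranspose_sub, conjTranspose_smul, conjTranspose_vecMulVec, star_star,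
      sub_mul, mul_sub, smul_mul_smul_comm, vecMulVec_mul_vecMulVec, hψ, hφ, ← hc, hφψ,
      one_smul, trace_sub, trace_smul, trace_vecMulVec, smul_eq_mul, dotProduct_smul,
      dotProduct_comm _ (star _), Complex.normSq_eq_conj_mul_self, Complex.star_def,
      Complex.conj_conj]
    ring
  rw [Phi, htrace]
  norm_cast
  ring

theorem exists_normSq_dotProduct_eq_half (hn : 2 ≤ n) :
    ∃ ψ φ : Fin n → ℂ, star ψ ⬝ᵥ ψ = 1 ∧ star φ ⬝ᵥ φ = 1 ∧
      Complex.normSq (star ψ ⬝ᵥ φ) = 1 / 2 := by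
  let i₀ : Fin n := ⟨0, by omega⟩
  let i₁ : Fin n := ⟨1, by omega⟩
  have hne : i₁ ≠ i₀ := by simp [i₀, i₁, Fin.ext_iff]
  set a : ℂ := (((Real.sqrt 2)⁻¹ : ℝ) : ℂ)
  have ha : Complex.normSq a = 1 / 2 := by
    rw [Complex.normSq_ofReal, ← mul_inv, Real.mul_self_sqrt zero_le_two, one_div]
  refine ⟨Pi.single i₀ 1, a • (Pi.single i₀ 1 + Pi.single i₁ 1), by simp, ?_, ?_⟩
  · simp only [star_smul, star_add, Pi.star_single, star_one, smul_dotProduct, dotProduct_smul,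
      dotProduct_add, add_dotProduct, single_one_dotProduct, Pi.single_eq_same,
      Pi.single_eq_of_ne hne, Pi.single_eq_of_ne hne.symm, smul_eq_mul, add_zero, zero_add,
      mul_one, Complex.star_def, ← two_mul, mul_left_comm a, Complex.mul_conj, ha]
    norm_num
  · rw [Pi.star_single, star_one, single_one_dotProduct, Pi.smul_apply, Pi.add_apply,
      Pi.single_eq_same, Pi.single_eq_of_ne hne.symm, add_zero, smul_eq_mul, mul_one, ha]

end DensityMatrix

theorem phi_max_is_one {n : ℕ} (hn : 2 ≤ n) :
    (∃ ρ σ : Matrix (Fin n) (Fin n) ℂ,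
        IsDensityMatrix ρ ∧ IsDensityMatrix σ ∧
        (∃ ψ : Fin n → ℂ, star ψ ⬝ᵥ ψ = 1 ∧ ρ = pureState ψ) ∧
        (∃ φ : Fin n → ℂ, star φ ⬝ᵥ φ = 1 ∧ σ = pureState φ) ∧
        Phi ρ σ = 1) ∧
    ∀ ρ σ : Matrix (Fin n) (Fin n) ℂ,
      IsDensityMatrix ρ → IsDensityMatrix σ → Phi ρ σ ≤ 1 := by
  obtain ⟨ψ, φ, hψ, hφ, hhalf⟩ := exists_normSq_dotProduct_eq_half hn
  refine ⟨⟨pureState ψ, pureState φ, isDensityMatrix_pureState hψ, isDensityMatrix_pureState hφ,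
    ⟨ψ, hψ, rfl⟩, ⟨φ, hφ, rfl⟩, ?_⟩, fun _ _ => phi_le_one⟩
  rw [phi_pureState hψ hφ, hhalf]
  norm_num
end

section
/- In ℂ^d with d ≥ 1, let e₀ be the first standard basis vector and let u := (1/√d)·Σ_{j=0}^{d−1} e_j be the uniform superposition (a vector from a basis mutually unbiased with the standard basis). Then Φ(|e₀⟩⟨e₀|, |u⟩⟨u|) = 4(d−1)/d². -/
open Matrix ComplexOrder

/-!
For Hermitian idempotents `P`, `Q` the commutator is anti-Hermitian, so cyclicity of the trace
gives `Tr([P,Q]ᴴ[P,Q]) = 2 Tr(PQ) - 2 Tr(PQPQ)`. For the projections onto unit vectors `a`, `b`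
these traces are `t` and `t²` with `t = |⟨a,b⟩|²`, hence `Φ = 4(t - t²)`; for `e₀` and the uniform
superposition `t = 1/d`.
-/

namespace Matrix

variable {n R : Type*} [Fintype n] [CommRing R] [StarRing R]

theorem trace_conjTranspose_commutator_mul_commutator {P Q : Matrix n n R}
    (hP : P.IsHermitian) (hQ : Q.IsHermitian) (hPP : IsIdempotentElem P)
    (hQQ : IsIdempotentElem Q) :
    ((P * Q - Q * P)ᴴ * (P * Q - Q * P)).trace = 2 * (P * Q).trace - 2 * (P * Q * P * Q).trace := by
  have hC : (P * Q - Q * P)ᴴ = Q * P - P * Q := by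
    rw [conjTranspose_sub, conjTranspose_mul, conjTranspose_mul, hP.eq, hQ.eq]
  have hexpand : (Q * P - P * Q) * (P * Q - Q * P)
      = Q * (P * P) * Q - Q * P * Q * P - P * Q * P * Q + P * (Q * Q) * P := by
    noncomm_ring
  have hQPQ : (Q * P * Q).trace = (P * Q).trace := by
    rw [trace_mul_comm, ← Matrix.mul_assoc, hQQ.eq, trace_mul_comm]
  have hPQP : (P * Q * P).trace = (P * Q).trace := by
    rw [trace_mul_comm, ← Matrix.mul_assoc, hPP.eq]
  have hQPQP : (Q * P * Q * P).trace = (P * Q * P * Q).trace := by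
    rw [trace_mul_comm, ← Matrix.mul_assoc, ← Matrix.mul_assoc]
  rw [hC, hexpand, hPP.eq, hQQ.eq, trace_add, trace_sub, trace_sub, hQPQ, hPQP, hQPQP]
  ring

end Matrix

section PureState

variable {n : ℕ}

theorem pureState_isHermitian (a : Fin n → ℂ) : (pureState a).IsHermitian := by
  simp [IsHermitian, pureState]

theorem pureState_mul_pureState (a b : Fin n → ℂ) :
    pureState a * pureState b = (star a ⬝ᵥ b) • vecMulVec a (star b) := by
  rw [pureState, pureState, vecMulVec_mul_vecMulVec, vecMulVec_smul]

theorem isIdempotentElem_pureState {a : Fin n → ℂ} (ha : star a ⬝ᵥ a = 1) :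
    IsIdempotentElem (pureState a) := by
  rw [IsIdempotentElem, pureState_mul_pureState, ha, one_smul, pureState]

theorem trace_pureState_mul_pureState (a b : Fin n → ℂ) :
    (pureState a * pureState b).trace = Complex.normSq (star a ⬝ᵥ b) := by
  rw [pureState_mul_pureState, trace_smul, trace_vecMulVec, dotProduct_comm a,
    star_dotProduct b a, smul_eq_mul, Complex.star_def, Complex.mul_conj]

theorem trace_pureState_mul_pureState_sq (a b : Fin n → ℂ) :
    (pureState a * pureState b * pureState a * pureState b).trace
      = Complex.normSq (star a ⬝ᵥ b) ^ 2 := by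
  rw [Matrix.mul_assoc (pureState a * pureState b), ← trace_pureState_mul_pureState,
    pureState_mul_pureState, smul_mul_smul_comm, vecMulVec_mul_vecMulVec, vecMulVec_smul,
    trace_smul, trace_smul, trace_smul, trace_vecMulVec, dotProduct_comm a]
  simp only [smul_eq_mul]
  ring

theorem Phi_pureState_pureState {a b : Fin n → ℂ} (ha : star a ⬝ᵥ a = 1) (hb : star b ⬝ᵥ b = 1) :
    Phi (pureState a) (pureState b)
      = 4 * (Complex.normSq (star a ⬝ᵥ b) - Complex.normSq (star a ⬝ᵥ b) ^ 2) := by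
  rw [Phi, trace_conjTranspose_commutator_mul_commutator (pureState_isHermitian a)
    (pureState_isHermitian b) (isIdempotentElem_pureState ha) (isIdempotentElem_pureState hb),
    trace_pureState_mul_pureState, trace_pureState_mul_pureState_sq]
  norm_cast
  ring

end PureState

theorem phi_mub_states (d : ℕ) (hd : 1 ≤ d)
    (e₀ u : Fin d → ℂ)
    (he₀ : e₀ = fun j : Fin d => if (j : ℕ) = 0 then (1 : ℂ) else 0)
    (hu : u = fun _ => (1 / Real.sqrt d : ℂ)) :
    Phi (pureState e₀) (pureState u) = 4 * ((d : ℝ) - 1) / (d : ℝ) ^ 2 := by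
  have hd₀ : (d : ℝ) ≠ 0 := by positivity
  have he₀_single : e₀ = Pi.single ⟨0, hd⟩ 1 := by
    ext j
    simp [he₀, Pi.single_apply, Fin.ext_iff]
  have hsqrt : Complex.normSq (1 / Real.sqrt d : ℂ) = 1 / d := by
    rw [← Complex.ofReal_one, ← Complex.ofReal_div, Complex.normSq_ofReal, div_mul_div_comm,
      Real.mul_self_sqrt d.cast_nonneg, one_mul]
  have he₀_unit : star e₀ ⬝ᵥ e₀ = 1 := by
    rw [he₀_single, ← Pi.single_star, star_one, single_dotProduct, one_mul, Pi.single_eq_same]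
  have hu_unit : star u ⬝ᵥ u = 1 := by
    simp only [hu, dotProduct, Pi.star_apply, Complex.star_def, ← Complex.normSq_eq_conj_mul_self,
      hsqrt, Finset.sum_const, Finset.card_univ, Fintype.card_fin, nsmul_eq_mul]
    push_cast
    field_simp
  have hoverlap : star e₀ ⬝ᵥ u = 1 / Real.sqrt d := by
    rw [he₀_single, ← Pi.single_star, star_one, single_dotProduct, one_mul, hu]
  rw [Phi_pureState_pureState he₀_unit hu_unit, hoverlap, hsqrt]
  field_simp
end
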